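/- arXiv:1805.00691 — 4 statements merged into one kernel-verified Lean document; each statement's English description precedes it below -/
import Mathlib

section
/- Let X₀, X₁ be rearrangement invariant spaces on [0,1] with X₀ ⊂ X₁, ‖x‖_{X₁} ≤ ‖x‖_{X₀} for all x ∈ X₀. For α, β > 0 and a measurable set A ⊂ [0,1] with m(A) = t, the K-functional satisfies k(α, β, χ_A; X₀, X₁) = min{α·φ_{X₀}(t), β·φ_{X₁}(t)}, where φ_{X_i} are the fundamental functions. -/
open MeasureTheory Set Filter Topology

noncomputable section

/-- A Banach function lattice on a subset `I ⊆ ℝ` (with Lebesgue measure), encoded by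
a membership predicate `Mem` and a (total) norm function `N` satisfying the lattice/ideal
axioms on members. -/
structure BFL (I : Set ℝ) where
  Mem : (ℝ → ℝ) → Prop
  N : (ℝ → ℝ) → ℝ
  mem_meas : ∀ f, Mem f → AEMeasurable f (volume.restrict I)
  nonneg : ∀ f, 0 ≤ N f
  zero_mem : Mem 0
  zero_norm : N 0 = 0
  ideal : ∀ f g, AEMeasurable f (volume.restrict I) →
    (∀ᵐ t ∂volume.restrict I, |f t| ≤ |g t|) → Mem g → Mem f ∧ N f ≤ N g
  add_mem : ∀ f g, Mem f → Mem g → Mem (f + g)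
  add_le : ∀ f g, Mem f → Mem g → N (f + g) ≤ N f + N g
  smul_mem : ∀ (c : ℝ) f, Mem f → Mem (c • f)
  smul_norm : ∀ (c : ℝ) f, Mem f → N (c • f) = |c| * N f

/-- A rearrangement invariant (symmetric) space on `I`: a Banach function lattice whose
norm depends only on the distribution function, having the Fatou property (the paper's
standing assumption that r.i. spaces are separable or maximal). -/
structure RIS (I : Set ℝ) extends BFL I where
  symm : ∀ f g, AEMeasurable f (volume.restrict I) → Mem g →
    (∀ τ : ℝ, 0 < τ →
      (volume.restrict I) {t | τ < |f t|} = (volume.restrict I) {t | τ < |g t|}) →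
    Mem f ∧ N f = N g
  fatou : ∀ (f : ℕ → ℝ → ℝ) (g : ℝ → ℝ) (C : ℝ), (∀ n, Mem (f n)) →
    (∀ n, ∀ᵐ t ∂volume.restrict I, 0 ≤ f n t ∧ f n t ≤ f (n + 1) t) →
    (∀ᵐ t ∂volume.restrict I, Tendsto (fun n => f n t) atTop (𝓝 (g t))) →
    AEMeasurable g (volume.restrict I) → (∀ n, N (f n) ≤ C) →
    Mem g ∧ N g ≤ C

/-- The fundamental function `φ_X(t) = ‖χ_{[0,t]}‖_X` of an r.i. space on `[0,1]`. -/
def fund (X : RIS (Set.Icc (0:ℝ) 1)) (t : ℝ) : ℝ :=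
  X.N ((Set.Icc (0:ℝ) t).indicator fun _ => (1:ℝ))

/-- The Peetre K-functional `k(α, β, a; X₀, X₁)`. -/
def Kfun {I : Set ℝ} (X0 X1 : BFL I) (α β : ℝ) (a : ℝ → ℝ) : ℝ :=
  sInf {v | ∃ a0 a1, X0.Mem a0 ∧ X1.Mem a1 ∧ a = a0 + a1 ∧
    v = α * X0.N a0 + β * X1.N a1}

/-!
The upper bound comes from the decompositions `χ_A = χ_A + 0 = 0 + χ_A`. The lower bound rests on
the estimate `φ_X(t) ∫_A |f| ≤ t ‖f‖_X` for every `f` in an r.i. space `X`, i.e. on the averaging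
operator `f ↦ (t⁻¹ ∫_A f) χ_A` being a contraction. For a step function on `n` disjoint cells of
measure `t / n` covering `A`, its `n` cyclic rearrangements have the same norm and sum to
`(∑ values) χ_A`, so there the estimate is the triangle inequality. A general `f` is bounded
below on `A` by such step functions up to an error `O(1 / n)` in the integral, because Lebesgue
measure splits a bounded set into pieces of any prescribed measures. Finally, if
`χ_A = a₀ + a₁`, then `t = ∫_A a₀ + ∫_A a₁ ≤ t ‖a₀‖₀ / φ₀(t) + t ‖a₁‖₁ / φ₁(t)`, which gives
`min(α φ₀(t), β φ₁(t)) ≤ α ‖a₀‖₀ + β ‖a₁‖₁`.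
-/

open Function
open scoped ENNReal NNReal

local notation "χ " A:max => Set.indicator A fun _ => (1:ℝ)

lemma exists_volume_real_inter_Iic_eq {S : Set ℝ} (hS : Bornology.IsBounded S) {r : ℝ}
    (hr0 : 0 ≤ r) (hr : r ≤ volume.real S) : ∃ x, volume.real (S ∩ Iic x) = r := by
  obtain ⟨a, ha⟩ := hS.bddBelow
  obtain ⟨b, hb⟩ := hS.bddAbove
  have hcont : Continuous fun x => volume.real (S ∩ Iic x) := by
    refine (LipschitzWith.of_le_add fun x y => ?_).continuous
    have hsub : S ∩ Iic x ⊆ S ∩ Iic y ∪ Ioc y x := fun z hz => by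
      rcases le_or_gt z y with h | h
      exacts [Or.inl ⟨hz.1, h⟩, Or.inr ⟨h, hz.2⟩]
    calc volume.real (S ∩ Iic x) ≤ volume.real (S ∩ Iic y ∪ Ioc y x) :=
          measureReal_mono hsub
            (((hS.subset inter_subset_left).union (Metric.isBounded_Ioc y x)).measure_lt_top.ne)
      _ ≤ volume.real (S ∩ Iic y) + volume.real (Ioc y x) := measureReal_union_le _ _
      _ ≤ volume.real (S ∩ Iic y) + dist x y := by
          rw [Real.volume_real_Ioc, Real.dist_eq]
          exact add_le_add_right (max_le (le_abs_self _) (abs_nonneg _)) _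
  have h0 : volume.real (S ∩ Iic a) = 0 :=
    measureReal_mono_null (s₂ := ({a} : Set ℝ))
      (fun z hz => le_antisymm hz.2 (ha hz.1)) (by simp [measureReal_def]) (by simp)
  have h1 : volume.real (S ∩ Iic b) = volume.real S := by
    rw [inter_eq_left.2 (show S ⊆ Iic b from fun z hz => hb hz)]
  exact intermediate_value_univ a b hcont ⟨h0 ▸ hr0, h1 ▸ hr⟩

lemma exists_pairwise_disjoint_volume_real_eq {S : Set ℝ} (hSm : MeasurableSet S)
    (hS : Bornology.IsBounded S) {a : ℝ} (ha : 0 < a) {k : ℕ} (hk : k * a ≤ volume.real S) :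
    ∃ C : Fin k → Set ℝ, (∀ i, MeasurableSet (C i)) ∧ (∀ i, C i ⊆ S) ∧
      Pairwise (Disjoint on C) ∧ ∀ i, volume.real (C i) = a := by
  have hfin : volume S ≠ ∞ := hS.measure_lt_top.ne
  have hx : ∀ i : Fin (k + 1), ∃ x, volume.real (S ∩ Iic x) = i * a := fun i =>
    exists_volume_real_inter_Iic_eq hS (by positivity)
      ((mul_le_mul_of_nonneg_right (by exact_mod_cast i.is_le) ha.le).trans hk)
  choose x hx using hx
  have hmono : StrictMono x := fun i j hij => by
    by_contra! h
    have := measureReal_mono (inter_subset_inter_right S (Iic_subset_Iic.2 h))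
      (measure_ne_top_of_subset inter_subset_left hfin)
    rw [hx, hx] at this
    exact this.not_gt (mul_lt_mul_of_pos_right (by exact_mod_cast hij) ha)
  refine ⟨fun i => S ∩ Ioc (x i.castSucc) (x i.succ), fun i => hSm.inter measurableSet_Ioc,
    fun i => inter_subset_left, (pairwise_disjoint_on _).2 fun i j hij => ?_, fun i => ?_⟩
  · exact (Ioc_disjoint_Ioc_of_le (hmono.monotone (Fin.succ_le_castSucc_iff.2 hij))).mono
      inter_subset_right inter_subset_right
  · dsimp only
    rw [← Iic_sdiff_Iic, inter_sdiff_distrib_left, measureReal_sdiff (inter_subset_inter_right S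
      (Iic_subset_Iic.2 (hmono.monotone (Fin.castSucc_le_succ i))))
      (hSm.inter measurableSet_Iic) (measure_ne_top_of_subset inter_subset_left hfin), hx, hx]
    simp only [Fin.val_succ, Fin.val_castSucc, Nat.cast_add, Nat.cast_one]
    ring

lemma sum_le_of_mul_le_volume_real {J : Type*} [Fintype J] {A : Set ℝ}
    (hAb : Bornology.IsBounded A) {S : J → Set ℝ} (hSm : ∀ j, MeasurableSet (S j))
    (hSA : ∀ j, S j ⊆ A) (hSd : Pairwise (Disjoint on S)) {a : ℝ} (ha : 0 < a) {n : ℕ}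
    (hn : n * a = volume.real A) {k : J → ℕ} (hk : ∀ j, k j * a ≤ volume.real (S j)) :
    ∑ j, k j ≤ n := by
  have hfin : volume A ≠ ∞ := hAb.measure_lt_top.ne
  have : (∑ j, k j : ℕ) * a ≤ n * a := calc
    (∑ j, k j : ℕ) * a = ∑ j, k j * a := by push_cast; rw [Finset.sum_mul]
    _ ≤ ∑ j, volume.real (S j) := Finset.sum_le_sum fun j _ => hk j
    _ = volume.real (⋃ j, S j) := (measureReal_iUnion_fintype hSd hSm
        fun j => measure_ne_top_of_subset (hSA j) hfin).symm
    _ ≤ n * a := hn ▸ measureReal_mono (iUnion_subset hSA) hfin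
  exact_mod_cast le_of_mul_le_mul_right this ha

lemma exists_pairwise_disjoint_sigma_volume_real_eq {J : Type*} {S : J → Set ℝ}
    (hSm : ∀ j, MeasurableSet (S j)) (hSb : ∀ j, Bornology.IsBounded (S j))
    (hSd : Pairwise (Disjoint on S)) {a : ℝ} (ha : 0 < a) {k : J → ℕ}
    (hk : ∀ j, k j * a ≤ volume.real (S j)) :
    ∃ C : (Σ j, Fin (k j)) → Set ℝ, (∀ p, MeasurableSet (C p)) ∧ (∀ p, C p ⊆ S p.1) ∧
      Pairwise (Disjoint on C) ∧ ∀ p, volume.real (C p) = a := by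
  choose C hCm hCS hCd hCa using fun j =>
    exists_pairwise_disjoint_volume_real_eq (hSm j) (hSb j) ha (hk j)
  refine ⟨fun p => C p.1 p.2, fun p => hCm p.1 p.2, fun p => hCS p.1 p.2, ?_, fun p => hCa p.1 p.2⟩
  rintro ⟨j, i⟩ ⟨j', i'⟩ hne
  rcases eq_or_ne j j' with rfl | hj
  · exact hCd j fun h => hne (congrArg (Sigma.mk j) h)
  · exact (hSd hj).mono (hCS j i) (hCS j' i')

lemma exists_equipartition_with_cells_in {J : Type*} [Fintype J] {A : Set ℝ}
    (hA : MeasurableSet A) (hAb : Bornology.IsBounded A) {S : J → Set ℝ}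
    (hSm : ∀ j, MeasurableSet (S j)) (hSA : ∀ j, S j ⊆ A) (hSd : Pairwise (Disjoint on S))
    {a : ℝ} (ha : 0 < a) {n : ℕ} (hn : n * a = volume.real A) {k : J → ℕ}
    (hk : ∀ j, k j * a ≤ volume.real (S j)) (hK : ∑ j, k j ≤ n) :
    ∃ P : (Σ j, Fin (k j)) ⊕ Fin (n - ∑ j, k j) → Set ℝ, (∀ i, MeasurableSet (P i)) ∧
      Pairwise (Disjoint on P) ∧ (∀ i, volume.real (P i) = a) ∧ (∀ i, P i ⊆ A) ∧
      (∀ p, P (.inl p) ⊆ S p.1) ∧ volume (A \ ⋃ i, P i) = 0 := by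
  have hfin : volume A ≠ ∞ := hAb.measure_lt_top.ne
  obtain ⟨C, hCm, hCS, hCd, hCa⟩ := exists_pairwise_disjoint_sigma_volume_real_eq hSm
    (fun j => hAb.subset (hSA j)) hSd ha hk
  have hCA p : C p ⊆ A := (hCS p).trans (hSA p.1)
  set U := ⋃ p, C p
  have hUm : MeasurableSet U := .iUnion hCm
  have hR : volume.real (A \ U) = (n - ∑ j, k j : ℕ) * a := by
    rw [measureReal_sdiff (iUnion_subset hCA) hUm hfin,
      measureReal_iUnion_fintype hCd hCm fun p => measure_ne_top_of_subset (hCA p) hfin, ← hn,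
      Nat.cast_sub hK]
    simp [hCa, Fintype.card_sigma]
    ring
  obtain ⟨D, hDm, hDR, hDd, hDa⟩ :=
    exists_pairwise_disjoint_volume_real_eq (hA.diff hUm) (hAb.subset sdiff_subset) ha hR.ge
  refine ⟨Sum.elim C D, ?_, ?_, ?_, ?_, hCS, ?_⟩
  · rintro (p | i)
    exacts [hCm p, hDm i]
  · rintro (p | i) (q | i') hne
    · exact hCd fun h => hne (congrArg _ h)
    · exact disjoint_left.2 fun x hx hx' => (hDR i' hx').2 (mem_iUnion.2 ⟨p, hx⟩)
    · exact disjoint_left.2 fun x hx hx' => (hDR i hx).2 (mem_iUnion.2 ⟨q, hx'⟩)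
    · exact hDd fun h => hne (congrArg _ h)
  · rintro (p | i)
    exacts [hCa p, hDa i]
  · rintro (p | i)
    exacts [hCA p, (hDR i).trans sdiff_subset]
  · have hRfin : volume (A \ U) ≠ ∞ := measure_ne_top_of_subset sdiff_subset hfin
    rw [iUnion_sum, ← Set.sdiff_sdiff]
    change volume ((A \ U) \ ⋃ i, D i) = 0
    rw [← measureReal_eq_zero_iff
      (measure_ne_top_of_subset sdiff_subset hRfin), measureReal_sdiff (iUnion_subset hDR)
      (.iUnion hDm) hRfin, hR, measureReal_iUnion_fintype hDd hDm
      fun i => measure_ne_top_of_subset (hDR i) hRfin]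
    simp [hDa]

section StepFunction

variable {ι : Type*} [Fintype ι] {P : ι → Set ℝ} {v : ι → ℝ}

def stepFun (P : ι → Set ℝ) (v : ι → ℝ) (x : ℝ) : ℝ :=
  ∑ i, (P i).indicator (fun _ => v i) x

lemma stepFun_apply_of_mem (hP : Pairwise (Disjoint on P)) {x : ℝ} {j : ι} (hx : x ∈ P j) :
    stepFun P v x = v j := by
  rw [stepFun, Finset.sum_eq_single j
    (fun i _ hij => indicator_of_notMem (disjoint_left.1 (hP hij.symm) hx) _) (by simp),
    indicator_of_mem hx]

lemma stepFun_apply_of_forall_notMem {x : ℝ} (hx : ∀ i, x ∉ P i) : stepFun P v x = 0 :=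
  Finset.sum_eq_zero fun i _ => indicator_of_notMem (hx i) _

lemma measurable_stepFun (hPm : ∀ i, MeasurableSet (P i)) : Measurable (stepFun P v) :=
  Finset.measurable_sum _ fun i _ => measurable_const.indicator (hPm i)

lemma abs_stepFun_le (hP : Pairwise (Disjoint on P)) {h : ℝ → ℝ} (h0 : ∀ x, 0 ≤ h x)
    (hv : ∀ i, ∀ x ∈ P i, |v i| ≤ h x) (x : ℝ) : |stepFun P v x| ≤ h x := by
  by_cases hx : ∃ i, x ∈ P i
  · obtain ⟨i, hi⟩ := hx
    rw [stepFun_apply_of_mem hP hi]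
    exact hv i x hi
  · push Not at hx
    rw [stepFun_apply_of_forall_notMem hx, abs_zero]
    exact h0 x

lemma setOf_lt_abs_stepFun (hP : Pairwise (Disjoint on P)) {τ : ℝ} (hτ : 0 < τ) :
    {x | τ < |stepFun P v x|} = ⋃ i ∈ Finset.univ.filter (fun i => τ < |v i|), P i := by
  ext x
  simp only [mem_ofPred_eq, mem_iUnion, Finset.mem_filter, Finset.mem_univ, true_and,
    exists_prop]
  by_cases hx : ∃ j, x ∈ P j
  · obtain ⟨j, hj⟩ := hx
    rw [stepFun_apply_of_mem hP hj]
    refine ⟨fun h => ⟨j, h, hj⟩, fun ⟨i, hi, hxi⟩ => ?_⟩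
    obtain rfl : i = j := hP.eq (not_disjoint_iff.2 ⟨x, hxi, hj⟩)
    exact hi
  · push Not at hx
    rw [stepFun_apply_of_forall_notMem hx, abs_zero]
    exact iff_of_false hτ.not_gt fun ⟨i, _, hxi⟩ => hx i hxi

lemma setOf_lt_abs_indicator_one (S : Set ℝ) {τ : ℝ} (hτ : 0 < τ) :
    {x | τ < |(χ S) x|} = if τ < 1 then S else ∅ := by
  ext x
  by_cases hx : x ∈ S <;> split_ifs with h1 <;> simp [hx, h1, hτ.not_gt]

end StepFunction

namespace BFL

variable {I : Set ℝ} (X : BFL I)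

lemma sum_mem {κ : Type*} {s : Finset κ} {f : κ → ℝ → ℝ} (hf : ∀ k ∈ s, X.Mem (f k)) :
    X.Mem (∑ k ∈ s, f k) :=
  Finset.sum_induction f X.Mem X.add_mem X.zero_mem hf

lemma N_sum_le {κ : Type*} {s : Finset κ} {f : κ → ℝ → ℝ} (hf : ∀ k ∈ s, X.Mem (f k)) :
    X.N (∑ k ∈ s, f k) ≤ ∑ k ∈ s, X.N (f k) :=
  Finset.le_sum_of_subadditive_on_pred X.N X.Mem X.zero_norm.le X.add_le X.add_mem f hf

lemma indicator_mem_of_subset {A B : Set ℝ} (hB : X.Mem (χ B)) (hA : MeasurableSet A)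
    (hAB : A ⊆ B) : X.Mem (χ A) :=
  (X.ideal _ _ (measurable_const.indicator hA).aemeasurable (ae_of_all _ fun x => by
    by_cases hx : x ∈ A
    exacts [by simp [hx, hAB hx], by simp [hx]]) hB).1

lemma N_indicator_eq_zero {A : Set ℝ} (hA : MeasurableSet A) (h : volume A = 0) :
    X.N (χ A) = 0 := by
  refine le_antisymm ?_ (X.nonneg _)
  refine X.zero_norm ▸ (X.ideal _ 0 (measurable_const.indicator hA).aemeasurable ?_ X.zero_mem).2
  filter_upwards [ae_restrict_of_ae (measure_eq_zero_iff_ae_notMem.1 h)] with x hx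
  simp [hx]

end BFL

namespace RIS

variable {I : Set ℝ} (X : RIS I) {A : Set ℝ} {f : ℝ → ℝ} {J : Type*} [Fintype J]
  {S : J → Set ℝ} {c : J → ℝ}

lemma N_stepFun_comp_perm {ι : Type*} [Fintype ι] {P : ι → Set ℝ} {v : ι → ℝ}
    (hPm : ∀ i, MeasurableSet (P i)) (hPd : Pairwise (Disjoint on P))
    (hPμ : ∀ i j, volume.restrict I (P i) = volume.restrict I (P j))
    (hg : X.Mem (stepFun P v)) (σ : Equiv.Perm ι) :
    X.Mem (stepFun P (v ∘ σ)) ∧ X.N (stepFun P (v ∘ σ)) = X.N (stepFun P v) := by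
  refine X.symm _ _ (measurable_stepFun hPm).aemeasurable hg fun τ hτ => ?_
  rw [setOf_lt_abs_stepFun hPd hτ, setOf_lt_abs_stepFun hPd hτ,
    measure_biUnion_finset (fun i _ j _ hij => hPd hij) fun i _ => hPm i,
    measure_biUnion_finset (fun i _ j _ hij => hPd hij) fun i _ => hPm i]
  exact Finset.sum_equiv σ (by simp) fun i _ => hPμ _ _

lemma abs_sum_mul_N_indicator_le (hA : MeasurableSet A) (hχ : X.Mem (χ A))
    {ι : Type*} [Fintype ι] {P : ι → Set ℝ} {v : ι → ℝ}
    (hPm : ∀ i, MeasurableSet (P i)) (hPd : Pairwise (Disjoint on P))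
    (hPμ : ∀ i j, volume.restrict I (P i) = volume.restrict I (P j))
    (hcover : volume.restrict I (A \ ⋃ i, P i) = 0) (hg : X.Mem (stepFun P v)) :
    |∑ i, v i| * X.N (χ A) ≤ Fintype.card ι * X.N (stepFun P v) := by
  cases isEmpty_or_nonempty ι
  · simp
  -- Averaging over the translates `i ↦ v (i + k)` for any group structure on `ι` makes the
  -- values constant.
  let _ : NeZero (Fintype.card ι) := ⟨Fintype.card_ne_zero⟩
  let _ : AddGroup ι := (Fintype.equivFin ι).addGroup
  set G : ℝ → ℝ := ∑ k : ι, stepFun P (v ∘ Equiv.addRight k) with hG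
  have hshift := X.N_stepFun_comp_perm hPm hPd hPμ hg
  have hGmem : X.Mem G := X.sum_mem fun k _ => (hshift _).1
  have hGapply : ∀ x j, x ∈ P j → G x = ∑ i, v i := fun x j hx => by
    simp only [hG, Finset.sum_apply, stepFun_apply_of_mem hPd hx, comp_apply,
      Equiv.coe_addRight]
    exact Equiv.sum_comp (Equiv.addLeft j) v
  have hle := (X.ideal ((∑ i, v i) • χ A) G
    ((measurable_const.indicator hA).const_smul _).aemeasurable ?_ hGmem).2
  · rw [X.smul_norm _ _ hχ] at hle
    calc |∑ i, v i| * X.N (χ A) ≤ X.N G := hle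
      _ ≤ ∑ k : ι, X.N (stepFun P (v ∘ Equiv.addRight k)) :=
          X.N_sum_le fun k _ => (hshift _).1
      _ = Fintype.card ι * X.N (stepFun P v) := by
          rw [Finset.sum_congr rfl fun k _ => (hshift _).2]; simp
  · filter_upwards [measure_eq_zero_iff_ae_notMem.1 hcover] with x hx
    by_cases hxA : x ∈ A
    · obtain ⟨j, hj⟩ := mem_iUnion.1 (not_not.1 fun h => hx ⟨hxA, h⟩)
      simp [hxA, hGapply x j hj]
    · simp [hxA]

lemma N_indicator_eq_of_volume_eq {B : Set ℝ} (hB : MeasurableSet B) (hχ : X.Mem (χ A))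
    (h : volume.restrict I B = volume.restrict I A) : X.N (χ B) = X.N (χ A) :=
  (X.symm _ _ (measurable_const.indicator hB).aemeasurable hχ fun τ hτ => by
    rw [setOf_lt_abs_indicator_one B hτ, setOf_lt_abs_indicator_one A hτ]
    split_ifs
    exacts [h, rfl]).2

lemma sum_mul_volume_real_mul_N_le_add (hA : MeasurableSet A) (hAb : Bornology.IsBounded A)
    (hAI : A ⊆ I) (hχ : X.Mem (χ A)) (hf : X.Mem f) (hSm : ∀ j, MeasurableSet (S j))
    (hSA : ∀ j, S j ⊆ A) (hSd : Pairwise (Disjoint on S)) (hc : ∀ j, 0 ≤ c j)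
    (hcf : ∀ j, ∀ x ∈ S j, c j ≤ |f x|)
    (ht : 0 < volume.real A) {n : ℕ} (hn : 0 < n) :
    (∑ j, c j * volume.real (S j)) * X.N (χ A) ≤
      volume.real A * X.N f + volume.real A / n * (∑ j, c j) * X.N (χ A) := by
  set t := volume.real A
  set a := t / n
  have ha : 0 < a := by positivity
  have hna : n * a = t := by simp only [a]; field_simp
  have hfin : volume A ≠ ∞ := hAb.measure_lt_top.ne
  set k : J → ℕ := fun j => ⌊volume.real (S j) / a⌋₊
  have hk j : k j * a ≤ volume.real (S j) := (le_div_iff₀ ha).1 (Nat.floor_le (by positivity))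
  have hk' j : volume.real (S j) ≤ (k j + 1) * a :=
    ((div_lt_iff₀ ha).1 (Nat.lt_floor_add_one _)).le
  have hK := sum_le_of_mul_le_volume_real hAb hSm hSA hSd ha hna hk
  obtain ⟨P, hPm, hPd, hPa, hPA, hPS, hcover⟩ :=
    exists_equipartition_with_cells_in hA hAb hSm hSA hSd ha hna hk hK
  set v : (Σ j, Fin (k j)) ⊕ Fin (n - ∑ j, k j) → ℝ := Sum.elim (fun p => c p.1) 0
  have hvf : ∀ i, ∀ x ∈ P i, |v i| ≤ |f x| := by
    rintro (p | i) x hx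
    · simpa [v, abs_of_nonneg (hc p.1)] using hcf p.1 x (hPS p hx)
    · simp [v]
  have hg : X.Mem (stepFun P v) ∧ X.N (stepFun P v) ≤ X.N f :=
    X.ideal _ f (measurable_stepFun hPm).aemeasurable (ae_of_all _
      (abs_stepFun_le hPd (fun x => abs_nonneg (f x)) hvf)) hf
  have hPμ i j : volume.restrict I (P i) = volume.restrict I (P j) := by
    rw [Measure.restrict_eq_self _ ((hPA i).trans hAI),
      Measure.restrict_eq_self _ ((hPA j).trans hAI),
      ← ofReal_measureReal (measure_ne_top_of_subset (hPA i) hfin),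
      ← ofReal_measureReal (measure_ne_top_of_subset (hPA j) hfin), hPa, hPa]
  have havg := X.abs_sum_mul_N_indicator_le hA hχ hPm hPd hPμ 
    (nonpos_iff_eq_zero.1 ((Measure.restrict_apply_le _ _).trans_eq hcover)) hg.1
  have hcard : Fintype.card ((Σ j, Fin (k j)) ⊕ Fin (n - ∑ j, k j)) = n := by
    simp [Fintype.card_sigma, hK]
  have hsumv : ∑ i, v i = ∑ j, k j * c j := by
    simp [v, Fintype.sum_sum_type, Fintype.sum_sigma]
  rw [hsumv, abs_of_nonneg (Finset.sum_nonneg fun j _ => mul_nonneg (Nat.cast_nonneg _) (hc j)),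
    hcard] at havg
  calc (∑ j, c j * volume.real (S j)) * X.N (χ A)
      ≤ (∑ j, c j * ((k j + 1) * a)) * X.N (χ A) := by
        gcongr with j
        · exact X.nonneg _
        · exact hc j
        · exact hk' j
    _ = a * ((∑ j, k j * c j) * X.N (χ A)) + a * (∑ j, c j) * X.N (χ A) := by
        simp only [Finset.sum_mul, Finset.mul_sum, ← Finset.sum_add_distrib]
        exact Finset.sum_congr rfl fun j _ => by ring
    _ ≤ a * (n * X.N f) + a * (∑ j, c j) * X.N (χ A) := by
        gcongr a * ?_ + _
        exact havg.trans (mul_le_mul_of_nonneg_left hg.2 (Nat.cast_nonneg _))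
    _ = t * X.N f + a * (∑ j, c j) * X.N (χ A) := by rw [← hna]; ring

lemma sum_mul_volume_real_mul_N_le (hA : MeasurableSet A) (hAb : Bornology.IsBounded A)
    (hAI : A ⊆ I) (hχ : X.Mem (χ A)) (hf : X.Mem f) (hSm : ∀ j, MeasurableSet (S j))
    (hSA : ∀ j, S j ⊆ A) (hSd : Pairwise (Disjoint on S)) (hc : ∀ j, 0 ≤ c j)
    (hcf : ∀ j, ∀ x ∈ S j, c j ≤ |f x|) :
    (∑ j, c j * volume.real (S j)) * X.N (χ A) ≤ volume.real A * X.N f := by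
  have hfin : volume A ≠ ∞ := hAb.measure_lt_top.ne
  rcases measureReal_nonneg.eq_or_lt with ht | ht
  · have hS j : volume.real (S j) = 0 := measureReal_mono_null (hSA j) ht.symm hfin
    simp [hS, ← ht]
  refine ge_of_tendsto ?_ (eventually_atTop.2 ⟨1, fun n hn =>
    X.sum_mul_volume_real_mul_N_le_add hA hAb hAI hχ hf hSm hSA hSd hc hcf ht hn⟩)
  simpa using tendsto_const_nhds.add
    (((tendsto_const_div_atTop_nhds_zero_nat (volume.real A)).mul_const _).mul_const _)

lemma setLIntegral_enorm_le (hA : MeasurableSet A) (hAb : Bornology.IsBounded A) (hAI : A ⊆ I)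
    (hχ : X.Mem (χ A)) (hpos : 0 < X.N (χ A)) (hf : X.Mem f) :
    ∫⁻ x in A, ‖f x‖ₑ ≤ ENNReal.ofReal (volume.real A * X.N f / X.N (χ A)) := by
  have hfin : volume A ≠ ∞ := hAb.measure_lt_top.ne
  rw [lintegral_eq_nnreal]
  refine iSup₂_le fun φ hφ => ?_
  set S : φ.range → Set ℝ := fun c => φ ⁻¹' {c.1} ∩ A
  have hSfin c : volume (S c) ≠ ∞ := measure_ne_top_of_subset inter_subset_right hfin
  have key := X.sum_mul_volume_real_mul_N_le (S := S) (c := fun c => (c.1 : ℝ)) hA hAb hAI hχ hf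
    (fun c => (φ.measurableSet_fiber c).inter hA) (fun c => inter_subset_right)
    (fun c c' hcc => disjoint_left.2 fun x hx hx' => hcc (Subtype.ext (hx.1.symm.trans hx'.1)))
    (fun c => c.1.coe_nonneg) fun c x hx => by
      have := hφ x
      rw [hx.1, enorm_eq_nnnorm, ENNReal.coe_le_coe] at this
      simpa [Real.norm_eq_abs] using NNReal.coe_le_coe.2 this
  have hsum : (φ.map ((↑) : ℝ≥0 → ℝ≥0∞)).lintegral (volume.restrict A) =
      ENNReal.ofReal (∑ c : φ.range, (c.1 : ℝ) * volume.real (S c)) := by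
    rw [SimpleFunc.map_lintegral, ← Finset.sum_coe_sort φ.range,
      ENNReal.ofReal_sum_of_nonneg fun c _ => by positivity]
    refine Finset.sum_congr rfl fun c _ => ?_
    rw [ENNReal.ofReal_mul c.1.coe_nonneg, ENNReal.ofReal_coe_nnreal, ofReal_measureReal (hSfin c),
      Measure.restrict_apply (φ.measurableSet_fiber _)]
  rw [hsum]
  exact ENNReal.ofReal_le_ofReal ((le_div_iff₀ hpos).2 key)

lemma integrable_and_abs_setIntegral_mul_N_le (hA : MeasurableSet A)
    (hAb : Bornology.IsBounded A) (hAI : A ⊆ I) (hχ : X.Mem (χ A)) (hpos : 0 < X.N (χ A))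
    (hf : X.Mem f) :
    Integrable f (volume.restrict A) ∧ |∫ x in A, f x| * X.N (χ A) ≤ volume.real A * X.N f := by
  have hlin := X.setLIntegral_enorm_le hA hAb hAI hχ hpos hf
  have hmeas : AEStronglyMeasurable f (volume.restrict A) := by
    have := (X.mem_meas f hf).restrict (s := A)
    rw [Measure.restrict_restrict hA, inter_eq_left.2 hAI] at this
    exact this.aestronglyMeasurable
  refine ⟨⟨hmeas, hlin.trans_lt ENNReal.ofReal_lt_top⟩, (le_div_iff₀ hpos).1 ?_⟩
  calc |∫ x in A, f x| ≤ ∫ x in A, ‖f x‖ := abs_integral_le_integral_abs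
    _ = (∫⁻ x in A, ‖f x‖ₑ).toReal := integral_norm_eq_lintegral_enorm hmeas
    _ ≤ volume.real A * X.N f / X.N (χ A) :=
        ENNReal.toReal_le_of_le_ofReal (by have := X.nonneg f; positivity) hlin

end RIS

lemma fund_eq_N_indicator (X : RIS (Icc (0:ℝ) 1)) {A : Set ℝ} (hAI : A ⊆ Icc 0 1) {t : ℝ}
    (ht : volume A = ENNReal.ofReal t) (hχ : X.Mem (χ A)) :
    fund X t = X.N (χ A) := by
  have ht1 : t ≤ 1 := ENNReal.ofReal_le_one.1 (ht ▸ (measure_mono hAI).trans_eq (by simp))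
  refine X.N_indicator_eq_of_volume_eq measurableSet_Icc hχ ?_
  rw [Measure.restrict_eq_self _ (Icc_subset_Icc_right ht1), Measure.restrict_eq_self _ hAI, ht,
    Real.volume_Icc, sub_zero]

section KFunctional

variable {I : Set ℝ} {X0 X1 : BFL I} {α β : ℝ} {a a0 a1 : ℝ → ℝ}

lemma Kfun_le (hα : 0 ≤ α) (hβ : 0 ≤ β) (ha0 : X0.Mem a0) (ha1 : X1.Mem a1) (ha : a = a0 + a1) :
    Kfun X0 X1 α β a ≤ α * X0.N a0 + β * X1.N a1 := by
  refine csInf_le ⟨0, ?_⟩ ⟨a0, a1, ha0, ha1, ha, rfl⟩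
  rintro _ ⟨b0, b1, -, -, -, rfl⟩
  have := X0.nonneg b0
  have := X1.nonneg b1
  positivity

lemma le_Kfun {m : ℝ} (hne : ∃ a0 a1, X0.Mem a0 ∧ X1.Mem a1 ∧ a = a0 + a1)
    (h : ∀ a0 a1, X0.Mem a0 → X1.Mem a1 → a = a0 + a1 → m ≤ α * X0.N a0 + β * X1.N a1) :
    m ≤ Kfun X0 X1 α β a := by
  obtain ⟨a0, a1, ha0, ha1, ha⟩ := hne
  refine le_csInf ⟨_, a0, a1, ha0, ha1, ha, rfl⟩ ?_
  rintro _ ⟨b0, b1, hb0, hb1, hb, rfl⟩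
  exact h b0 b1 hb0 hb1 hb

end KFunctional

theorem min_mul_N_indicator_le {I : Set ℝ} (X0 X1 : RIS I) {A : Set ℝ} (hA : MeasurableSet A)
    (hAb : Bornology.IsBounded A) (hAI : A ⊆ I) (h0 : X0.Mem (χ A)) (h1 : X1.Mem (χ A))
    {α β : ℝ} (hα : 0 ≤ α) (hβ : 0 ≤ β) {a0 a1 : ℝ → ℝ} (ha0 : X0.Mem a0) (ha1 : X1.Mem a1)
    (hsplit : χ A = a0 + a1) :
    min (α * X0.N (χ A)) (β * X1.N (χ A)) ≤ α * X0.N a0 + β * X1.N a1 := by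
  set m := min (α * X0.N (χ A)) (β * X1.N (χ A))
  have hrhs : 0 ≤ α * X0.N a0 + β * X1.N a1 := by
    have := X0.nonneg a0
    have := X1.nonneg a1
    positivity
  rcases le_or_gt m 0 with hm | hm
  · exact hm.trans hrhs
  have hpos0 : 0 < X0.N (χ A) := pos_of_mul_pos_right (lt_min_iff.1 hm).1 hα
  have hpos1 : 0 < X1.N (χ A) := pos_of_mul_pos_right (lt_min_iff.1 hm).2 hβ
  obtain ⟨hi0, hI0⟩ := X0.integrable_and_abs_setIntegral_mul_N_le hA hAb hAI h0 hpos0 ha0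
  obtain ⟨hi1, hI1⟩ := X1.integrable_and_abs_setIntegral_mul_N_le hA hAb hAI h1 hpos1 ha1
  have ht : 0 < volume.real A := by
    refine measureReal_nonneg.lt_of_ne fun h => hpos0.ne' (X0.N_indicator_eq_zero hA ?_)
    exact (measureReal_eq_zero_iff hAb.measure_lt_top.ne).1 h.symm
  have hsum : (∫ x in A, a0 x) + ∫ x in A, a1 x = volume.real A := by
    rw [← integral_add hi0 hi1, setIntegral_congr_fun hA (g := fun _ => (1:ℝ)) fun x hx => by
      simpa [hx] using (congrFun hsplit x).symm, setIntegral_const, smul_eq_mul, mul_one]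
  refine le_of_mul_le_mul_right ?_ ht
  calc m * volume.real A ≤ m * (|∫ x in A, a0 x| + |∫ x in A, a1 x|) := by
        rw [← hsum]
        exact mul_le_mul_of_nonneg_left (add_le_add (le_abs_self _) (le_abs_self _)) hm.le
    _ ≤ α * X0.N (χ A) * |∫ x in A, a0 x| + β * X1.N (χ A) * |∫ x in A, a1 x| := by
        rw [mul_add]
        gcongr
        exacts [min_le_left _ _, min_le_right _ _]
    _ ≤ α * (volume.real A * X0.N a0) + β * (volume.real A * X1.N a1) := by
        rw [mul_right_comm α, mul_right_comm β, mul_assoc α, mul_assoc β]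
        gcongr
    _ = (α * X0.N a0 + β * X1.N a1) * volume.real A := by ring

theorem stmt1_general (X0 X1 : RIS (Set.Icc (0:ℝ) 1))
    (hemb : ∀ f, X0.Mem f → X1.Mem f ∧ X1.N f ≤ X0.N f)
    (hconst : X0.Mem ((Set.Icc (0:ℝ) 1).indicator fun _ => (1:ℝ)))
    (α β : ℝ) (hα : 0 < α) (hβ : 0 < β)
    (A : Set ℝ) (hA : MeasurableSet A) (hAI : A ⊆ Set.Icc 0 1)
    (t : ℝ) (ht : volume A = ENNReal.ofReal t) :
    Kfun X0.toBFL X1.toBFL α β (A.indicator fun _ => (1:ℝ))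
      = min (α * fund X0 t) (β * fund X1 t) := by
  have hAb : Bornology.IsBounded A := Metric.isBounded_Icc (0:ℝ) 1 |>.subset hAI
  have h0 : X0.Mem (χ A) := X0.indicator_mem_of_subset hconst hA hAI
  have h1 : X1.Mem (χ A) := (hemb _ h0).1
  rw [fund_eq_N_indicator X0 hAI ht h0, fund_eq_N_indicator X1 hAI ht h1]
  refine le_antisymm (le_min ?_ ?_) (le_Kfun ⟨_, 0, h0, X1.zero_mem, (add_zero _).symm⟩
    fun a0 a1 ha0 ha1 => min_mul_N_indicator_le X0 X1 hA hAb hAI h0 h1 hα.le hβ.le ha0 ha1)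
  · simpa [X1.zero_norm] using Kfun_le hα.le hβ.le h0 X1.zero_mem (add_zero _).symm
  · simpa [X0.zero_norm] using Kfun_le hα.le hβ.le X0.zero_mem h1 (zero_add _).symm

/-- If `X₀ ⊂ X₁` are r.i. spaces on `[0,1]` with `‖·‖_{X₁} ≤ ‖·‖_{X₀}`,
then for `α, β > 0` and a measurable `A ⊆ [0,1]` with `m(A) = t`,
`k(α, β, χ_A; X₀, X₁) = min(α·φ_{X₀}(t), β·φ_{X₁}(t))`. -/
theorem stmt1 (X0 X1 : RIS (Set.Icc (0:ℝ) 1))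
    (hemb : ∀ f, X0.Mem f → X1.Mem f ∧ X1.N f ≤ X0.N f)
    (hconst : X0.Mem ((Set.Icc (0:ℝ) 1).indicator fun _ => (1:ℝ)))
    (α β : ℝ) (hα : 0 < α) (hβ : 0 < β)
    (A : Set ℝ) (hA : MeasurableSet A) (hAI : A ⊆ Set.Icc 0 1)
    (t : ℝ) (ht0 : 0 ≤ t) (ht : volume A = ENNReal.ofReal t) :
    Kfun X0.toBFL X1.toBFL α β (A.indicator fun _ => (1:ℝ))
      = min (α * fund X0 t) (β * fund X1 t) :=
  stmt1_general X0 X1 hemb hconst α β hα hβ A hA hAI t ht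
end
end

section
/- Let X₀, X₁ be r.i. spaces on [0,1] with X₀ strictly embedded in X₁ (i.e., any bounded sequence in X₀ whose supports have measures tending to 0 tends to 0 in X₁ norm), and φ_{X₀}(1) = φ_{X₁}(1) = 1. Then lim_{t→0⁺} φ_{X₁}(t)/φ_{X₀}(t) = 0. -/
open MeasureTheory Set Filter Topology

noncomputable section

/-- `X₀` is strictly embedded into `X₁`: every norm-bounded sequence in `X₀` whose supports
have measure tending to `0` tends to `0` in the `X₁` norm. -/
def StrictEmb (X0 X1 : RIS (Set.Icc (0:ℝ) 1)) : Prop :=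
  ∀ (x : ℕ → ℝ → ℝ) (C : ℝ), (∀ n, X0.Mem (x n)) → (∀ n, X0.N (x n) ≤ C) →
    Tendsto (fun n => volume (Function.support (x n) ∩ Set.Icc 0 1)) atTop (𝓝 0) →
    Tendsto (fun n => X1.N (x n)) atTop (𝓝 0)

namespace BFL

variable {I : Set ℝ} (X : BFL I)

theorem indicator_one_mem (hI : MeasurableSet I) (hImem : X.Mem (I.indicator fun _ => (1:ℝ)))
    {s : Set ℝ} (hs : MeasurableSet s) : X.Mem (s.indicator fun _ => (1:ℝ)) := by
  refine (X.ideal _ _ (measurable_const.indicator hs).aemeasurable ?_ hImem).1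
  filter_upwards [ae_restrict_mem hI] with t ht
  by_cases h : t ∈ s <;> simp [h, ht]

theorem N_inv_smul_self_le_one {f : ℝ → ℝ} (hf : X.Mem f) : X.N ((X.N f)⁻¹ • f) ≤ 1 := by
  rw [X.smul_norm _ _ hf, abs_inv, abs_of_nonneg (X.nonneg f)]
  exact inv_mul_le_one_of_le₀ le_rfl (X.nonneg f)

end BFL

theorem tendsto_volume_Icc_zero : Tendsto (fun s => volume (Icc (0:ℝ) s)) (𝓝 0) (𝓝 0) := by
  simpa [Real.volume_Icc] using ENNReal.continuous_ofReal.tendsto 0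

/- Normalising `f n` in `X₀` (with `0⁻¹ = 0` covering `‖f n‖_{X₀} = 0`) gives a bounded sequence
whose `X₁`-norms are exactly the ratios. -/
theorem StrictEmb.tendsto_N_div_N {X0 X1 : RIS (Icc (0:ℝ) 1)} (hstrict : StrictEmb X0 X1)
    {f : ℕ → ℝ → ℝ} (hf0 : ∀ n, X0.Mem (f n)) (hf1 : ∀ n, X1.Mem (f n))
    (hsupp : Tendsto (fun n => volume (Function.support (f n) ∩ Icc 0 1)) atTop (𝓝 0)) :
    Tendsto (fun n => X1.N (f n) / X0.N (f n)) atTop (𝓝 0) := by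
  have hsupp' : Tendsto (fun n => volume (Function.support ((X0.N (f n))⁻¹ • f n) ∩ Icc 0 1))
      atTop (𝓝 0) :=
    tendsto_of_tendsto_of_tendsto_of_le_of_le tendsto_const_nhds hsupp (fun _ => zero_le)
      fun n => measure_mono (inter_subset_inter_left _ (Function.support_const_smul_subset _ _))
  refine (hstrict _ 1 (fun n => X0.smul_mem _ _ (hf0 n))
    (fun n => X0.N_inv_smul_self_le_one (hf0 n)) hsupp').congr fun n => ?_
  rw [X1.smul_norm _ _ (hf1 n), abs_inv, abs_of_nonneg (X0.nonneg _), inv_mul_eq_div]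

theorem stmt3_general (X0 X1 : RIS (Set.Icc (0:ℝ) 1))
    (hemb : ∀ f, X0.Mem f → X1.Mem f ∧ X1.N f ≤ X0.N f)
    (hstrict : StrictEmb X0 X1)
    (hconst : X0.Mem ((Set.Icc (0:ℝ) 1).indicator fun _ => (1:ℝ))) :
    Tendsto (fun t => fund X1 t / fund X0 t) (𝓝[>] (0:ℝ)) (𝓝 0) := by
  have hmem : ∀ s : ℝ, X0.Mem ((Icc (0:ℝ) s).indicator fun _ => (1:ℝ)) := fun _ =>
    X0.indicator_one_mem measurableSet_Icc hconst measurableSet_Icc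
  rw [tendsto_iff_seq_tendsto]
  intro t ht
  refine hstrict.tendsto_N_div_N (fun n => hmem (t n)) (fun n => (hemb _ (hmem (t n))).1) ?_
  exact tendsto_of_tendsto_of_tendsto_of_le_of_le tendsto_const_nhds
    (tendsto_volume_Icc_zero.comp (ht.mono_right nhdsWithin_le_nhds)) (fun _ => zero_le)
    fun n => measure_mono (inter_subset_left.trans Set.support_indicator_subset)

/-- If `X₀` is strictly embedded in `X₁` (r.i. spaces on `[0,1]`, with
`‖·‖_{X₁} ≤ ‖·‖_{X₀}`) and `φ_{X₀}(1) = φ_{X₁}(1) = 1`, then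
`lim_{t→0⁺} φ_{X₁}(t)/φ_{X₀}(t) = 0`. -/
theorem stmt3 (X0 X1 : RIS (Set.Icc (0:ℝ) 1))
    (hemb : ∀ f, X0.Mem f → X1.Mem f ∧ X1.N f ≤ X0.N f)
    (hstrict : StrictEmb X0 X1)
    (hconst : X0.Mem ((Set.Icc (0:ℝ) 1).indicator fun _ => (1:ℝ)))
    (h0 : fund X0 1 = 1) (h1 : fund X1 1 = 1) :
    Tendsto (fun t => fund X1 t / fund X0 t) (𝓝[>] (0:ℝ)) (𝓝 0) :=
  stmt3_general X0 X1 hemb hstrict hconst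
end
end

section
/- Let X₀ ⊂ X₁ be r.i. spaces on [0,1] with the embedding strict and ‖·‖_{X₁} ≤ ‖·‖_{X₀}, let (m_k) satisfy m₁ ≥ 2 and the rapid-growth condition m_n^{-1}Σ_{i<n} m_i + m_n Σ_{i>n} m_i^{-1} < 2^{-n-1}. If (x_n) is a sequence of functions with k(m_k^{-1}, m_k, x_n; X₀, X₁) ≤ 1 for all k,n and m(supp x_n) → 0, then there is a subsequence (x_{n_k}) with ‖x_{n_k}‖_{X₁} ≤ 2/m_k for every k. -/
open MeasureTheory Set Filter Topology

noncomputable section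

/-!
Fix `k`. Since `k(m_k⁻¹, m_k, x_n) ≤ 1`, each `x_n` splits as `y_n + z_n` with
`‖y_n‖_{X₀} ≤ (3/2) m_k` and `‖z_n‖_{X₁} ≤ 3/(2 m_k)`, and cutting both summands down to
`supp x_n` keeps `supp y_n ⊆ supp x_n`. Strictness of the embedding then gives `‖y_n‖_{X₁} → 0`,
so `‖x_n‖_{X₁} ≤ 2/m_k` for all large `n`; a diagonal extraction over `k` finishes the proof.
-/

namespace BFL

variable {I : Set ℝ} (X : BFL I)

theorem indicator_mem_and_norm_le {f : ℝ → ℝ} (hf : X.Mem f) (s : Set ℝ)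
    (hs : NullMeasurableSet s (volume.restrict I)) :
    X.Mem (s.indicator f) ∧ X.N (s.indicator f) ≤ X.N f :=
  X.ideal _ f ((X.mem_meas f hf).indicator₀ hs)
    (Eventually.of_forall fun t => by by_cases ht : t ∈ s <;> simp [ht]) hf

variable {X}

theorem exists_decomp_support_subset_of_Kfun_lt {X0 X1 : BFL I} {α β c : ℝ} {x : ℝ → ℝ}
    (hx : ∃ a0 a1, X0.Mem a0 ∧ X1.Mem a1 ∧ x = a0 + a1) (hα : 0 ≤ α) (hβ : 0 ≤ β)
    (hK : Kfun X0 X1 α β x < c) :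
    ∃ y z, X0.Mem y ∧ X1.Mem z ∧ x = y + z ∧ α * X0.N y + β * X1.N z < c ∧
      Function.support y ⊆ Function.support x := by
  obtain ⟨a0, a1, h0, h1, hx⟩ := hx
  rw [Kfun] at hK
  obtain ⟨_, ⟨b0, b1, hb0, hb1, hb, rfl⟩, hlt⟩ :=
    exists_lt_of_csInf_lt (by exact ⟨_, a0, a1, h0, h1, hx, rfl⟩) hK
  have hs : NullMeasurableSet (Function.support x) (volume.restrict I) := by
    rw [hb]
    exact ((X0.mem_meas b0 hb0).add (X1.mem_meas b1 hb1)).nullMeasurable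
      (measurableSet_singleton 0).compl
  set s := Function.support x
  obtain ⟨hy, hy_le⟩ := X0.indicator_mem_and_norm_le hb0 s hs
  obtain ⟨hz, hz_le⟩ := X1.indicator_mem_and_norm_le hb1 s hs
  refine ⟨s.indicator b0, s.indicator b1, hy, hz, ?_, ?_, Set.support_indicator_subset⟩
  · rw [← Set.indicator_add', ← hb, Set.indicator_support]
  · calc α * X0.N (s.indicator b0) + β * X1.N (s.indicator b1)
        ≤ α * X0.N b0 + β * X1.N b1 := by gcongr
      _ < c := hlt

end BFL

theorem eventually_norm_le_of_Kfun_le_one {X0 X1 : RIS (Set.Icc (0:ℝ) 1)}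
    (hemb : ∀ f, X0.Mem f → X1.Mem f) (hstrict : StrictEmb X0 X1) {M : ℝ} (hM : 0 < M)
    {x : ℕ → ℝ → ℝ} (hxsum : ∀ n, ∃ a0 a1, X0.Mem a0 ∧ X1.Mem a1 ∧ x n = a0 + a1)
    (hK : ∀ n, Kfun X0.toBFL X1.toBFL M⁻¹ M (x n) ≤ 1)
    (hsupp : Tendsto (fun n => volume (Function.support (x n) ∩ Set.Icc 0 1))
      atTop (𝓝 0)) :
    ∀ᶠ n in atTop, X1.N (x n) ≤ 2 / M := by
  have hdecomp : ∀ n, ∃ y z, X0.Mem y ∧ X1.Mem z ∧ x n = y + z ∧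
      M⁻¹ * X0.N y + M * X1.N z < 3 / 2 ∧ Function.support y ⊆ Function.support (x n) :=
    fun n => BFL.exists_decomp_support_subset_of_Kfun_lt (hxsum n) (inv_nonneg.2 hM.le) hM.le
      ((hK n).trans_lt (by norm_num))
  choose y z hy hz hxyz hlt hy_supp using hdecomp
  have hy_le : ∀ n, X0.N (y n) ≤ 3 / 2 * M := fun n => by
    have := mul_nonneg hM.le (X1.nonneg (z n))
    have : M⁻¹ * X0.N (y n) ≤ 3 / 2 := by linarith [hlt n]
    rwa [inv_mul_le_iff₀ hM, mul_comm] at this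
  have hz_le : ∀ n, X1.N (z n) ≤ 3 / 2 / M := fun n => by
    have := mul_nonneg (inv_nonneg.2 hM.le) (X0.nonneg (y n))
    rw [le_div_iff₀ hM, mul_comm]
    linarith [hlt n]
  have hy_supp_vol : Tendsto (fun n => volume (Function.support (y n) ∩ Set.Icc 0 1))
      atTop (𝓝 0) :=
    tendsto_of_tendsto_of_tendsto_of_le_of_le tendsto_const_nhds hsupp (fun _ => zero_le)
      fun n => measure_mono (Set.inter_subset_inter_left _ (hy_supp n))
  have hy_small := (hstrict y _ hy hy_le hy_supp_vol).eventually_lt_const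
    (by positivity : (0:ℝ) < 1 / (2 * M))
  filter_upwards [hy_small] with n hn
  calc X1.N (x n) ≤ X1.N (y n) + X1.N (z n) := by
        rw [hxyz n]; exact X1.add_le _ _ (hemb _ (hy n)) (hz n)
    _ ≤ 1 / (2 * M) + 3 / 2 / M := by linarith [hz_le n]
    _ = 2 / M := by field_simp; norm_num

theorem stmt6_general (X0 X1 : RIS (Set.Icc (0:ℝ) 1))
    (hemb : ∀ f, X0.Mem f → X1.Mem f ∧ X1.N f ≤ X0.N f)
    (hstrict : StrictEmb X0 X1)
    (m : ℕ → ℝ) (hmono : StrictMono m) (hm0 : 2 ≤ m 0)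
    (x : ℕ → ℝ → ℝ)
    (hxsum : ∀ n, ∃ a0 a1, X0.Mem a0 ∧ X1.Mem a1 ∧ x n = a0 + a1)
    (hK : ∀ k n, Kfun X0.toBFL X1.toBFL (m k)⁻¹ (m k) (x n) ≤ 1)
    (hsupp : Tendsto (fun n => volume (Function.support (x n) ∩ Set.Icc 0 1))
      atTop (𝓝 0)) :
    ∃ φ : ℕ → ℕ, StrictMono φ ∧ ∀ k, X1.N (x (φ k)) ≤ 2 / m k := by
  have hm_pos : ∀ k, 0 < m k := fun k =>
    (by norm_num : (0:ℝ) < 2).trans_le (hm0.trans (hmono.monotone k.zero_le))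
  exact Filter.extraction_forall_of_eventually fun k =>
    eventually_norm_le_of_Kfun_le_one (fun f hf => (hemb f hf).1) hstrict (hm_pos k) hxsum
      (hK k) hsupp

/-- Let `X₀ ⊂ X₁` be r.i. spaces on `[0,1]` with strict embedding and
`‖·‖_{X₁} ≤ ‖·‖_{X₀}`, and let `(m_k)` satisfy `m₀ ≥ 2` and the rapid growth condition.
If `(x_n)` is a sequence in `X₀ + X₁` with `k(m_k⁻¹, m_k, x_n; X₀, X₁) ≤ 1` for all `k, n`
and `m(supp x_n) → 0`, then some subsequence satisfies `‖x_{n_k}‖_{X₁} ≤ 2/m_k`. -/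
theorem stmt6 (X0 X1 : RIS (Set.Icc (0:ℝ) 1))
    (hemb : ∀ f, X0.Mem f → X1.Mem f ∧ X1.N f ≤ X0.N f)
    (hstrict : StrictEmb X0 X1)
    (m : ℕ → ℝ) (hmono : StrictMono m) (hm0 : 2 ≤ m 0)
    (hmsum : Summable fun i => (m i)⁻¹)
    (hgrow : ∀ n, (m n)⁻¹ * ∑ i ∈ Finset.range n, m i
        + m n * ∑' i : ℕ, (m (n + 1 + i))⁻¹ < (2:ℝ) ^ (-(n:ℤ) - 2))
    (x : ℕ → ℝ → ℝ)
    (hxsum : ∀ n, ∃ a0 a1, X0.Mem a0 ∧ X1.Mem a1 ∧ x n = a0 + a1)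
    (hK : ∀ k n, Kfun X0.toBFL X1.toBFL (m k)⁻¹ (m k) (x n) ≤ 1)
    (hsupp : Tendsto (fun n => volume (Function.support (x n) ∩ Set.Icc 0 1))
      atTop (𝓝 0)) :
    ∃ φ : ℕ → ℕ, StrictMono φ ∧ ∀ k, X1.N (x (φ k)) ≤ 2 / m k :=
  stmt6_general X0 X1 hemb hstrict m hmono hm0 x hxsum hK hsupp
end
end

section
/- Let X be a separable r.i. space on (0,∞), a ∈ X with a ≠ 0 and supp a ⊂ [0,1), and define translations τ_n a(t) := a(t − n + 1)·χ_{[n−1,n)}(t). If some subsequence {τ_{n_k} a} spans a complemented subspace of X, then the full sequence {τ_n a} spans a complemented subspace of X. -/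
open MeasureTheory Set Filter Topology

noncomputable section

/-- The sequence `{v_k}` of (disjointly supported) functions spans a complemented subspace
of `X`: there exist biorthogonal functionals `b_k` such that the associated projection
`x ↦ Σ_k ⟨x, b_k⟩ v_k` is bounded on `X`. -/
def ComplSeq {I : Set ℝ} (X : RIS I) (v : ℕ → ℝ → ℝ) : Prop :=
  ∃ (b : ℕ → ℝ → ℝ) (C : ℝ), 0 < C ∧
    (∀ j k, (∫ t in I, b k t * v j t) = if j = k then (1:ℝ) else 0) ∧
    ∀ x, X.Mem x →
      X.Mem (fun t => ∑' k, (∫ s in I, b k s * x s) * v k t) ∧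
      X.N (fun t => ∑' k, (∫ s in I, b k s * x s) * v k t) ≤ C * X.N x

/-- The translation `τ_n a (t) = a(t − n)·χ_{[n, n+1)}(t)` (`0`-indexed version of the
paper's `τ_{n+1}`). -/
def transl (a : ℝ → ℝ) (n : ℕ) : ℝ → ℝ :=
  fun t => if t ∈ Set.Ico (n : ℝ) (n + 1) then a (t - n) else 0

/-!
`blockShift n` translates each `[j, j + 1)` onto `[n j, n j + 1)`, so it carries Lebesgue measure
on `[0, ∞)` to Lebesgue measure on the union of these blocks, and the rearrangement
`R x := x ∘ blockShift⁻¹` (zero off the blocks) preserves distributions, hence the norm of an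
r.i. space. With the functionals `b_k ∘ blockShift n`, the projection `Q` onto `[τ_k a]`
satisfies `Q x = P (R x) ∘ blockShift n` on `[0, ∞)`, where `P` is the given projection onto
`[τ_{n_k} a]`; so `Q x` and `P (R x)` are equimeasurable and
`‖Q x‖ = ‖P (R x)‖ ≤ C ‖R x‖ = C ‖x‖`.
-/

open Function

theorem measure_lt_abs_eq_of_ae_eq_comp {α β : Type*} [MeasurableSpace α] [MeasurableSpace β]
    {μ : Measure α} {ν : Measure β} {T : α → β} (hT : MeasurePreserving T μ ν) {f : α → ℝ}
    {g : β → ℝ} (hg : AEMeasurable g ν) (hfg : f =ᵐ[μ] g ∘ T) (τ : ℝ) :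
    μ {t | τ < |f t|} = ν {s | τ < |g s|} := by
  rw [← hT.measure_preimage (nullMeasurableSet_lt aemeasurable_const hg.abs)]
  exact measure_congr (hfg.fun_comp fun y => τ < |y|)

def blockShift (n : ℕ → ℕ) (t : ℝ) : ℝ := t - ⌊t⌋₊ + n ⌊t⌋₊

def blockIndex (n : ℕ → ℕ) (s : ℝ) : ℕ := sInf {j | s < n j + 1}

def blockUnshift (n : ℕ → ℕ) (s : ℝ) : ℝ := s - n (blockIndex n s) + blockIndex n s

def blocks (n : ℕ → ℕ) : Set ℝ := ⋃ j, Ico (n j : ℝ) (n j + 1)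

def blockRearrange (n : ℕ → ℕ) (x : ℝ → ℝ) : ℝ → ℝ := (blocks n).indicator (x ∘ blockUnshift n)

section Blocks

variable {n : ℕ → ℕ}

theorem natCast_add_one_le_of_strictMono (hn : StrictMono n) {i j : ℕ} (h : i < j) :
    (n i : ℝ) + 1 ≤ n j := by
  exact_mod_cast hn h

theorem blockIndex_eq {s : ℝ} {j : ℕ} (hlt : s < n j + 1) (hle : ∀ i < j, (n i : ℝ) + 1 ≤ s) :
    blockIndex n s = j := by
  have hmem : blockIndex n s ∈ {j | s < n j + 1} := Nat.sInf_mem ⟨j, hlt⟩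
  refine le_antisymm (Nat.sInf_le hlt) (not_lt.1 fun hi => ?_)
  exact (hle _ hi).not_gt hmem

theorem blockIndex_eq_of_mem_Ico (hn : StrictMono n) {s : ℝ} {j : ℕ}
    (hs : s ∈ Ico (n j : ℝ) (n j + 1)) : blockIndex n s = j :=
  blockIndex_eq hs.2 fun _ hi => (natCast_add_one_le_of_strictMono hn hi).trans hs.1

theorem blockShift_eq_of_mem_Ico {t : ℝ} {j : ℕ} (ht : t ∈ Ico (j : ℝ) (j + 1)) :
    blockShift n t = t + (n j - j) := by
  rw [blockShift, Nat.floor_eq_on_Ico j t ht]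
  ring

theorem blockShift_mem_Ico {t : ℝ} (ht : 0 ≤ t) :
    blockShift n t ∈ Ico (n ⌊t⌋₊ : ℝ) (n ⌊t⌋₊ + 1) := by
  constructor <;> simp only [blockShift] <;> linarith [Nat.floor_le ht, Nat.lt_floor_add_one t]

theorem blockIndex_blockShift (hn : StrictMono n) (t : ℝ) :
    blockIndex n (blockShift n t) = ⌊t⌋₊ := by
  refine blockIndex_eq (by simp only [blockShift]; linarith [Nat.lt_floor_add_one t]) fun i hi => ?_
  have ht : 0 ≤ t := zero_le_one.trans (Nat.floor_pos.1 (Nat.zero_lt_of_lt hi))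
  exact (natCast_add_one_le_of_strictMono hn hi).trans (blockShift_mem_Ico ht).1

theorem blockUnshift_blockShift (hn : StrictMono n) :
    LeftInverse (blockUnshift n) (blockShift n) := by
  intro t
  rw [blockUnshift, blockIndex_blockShift hn, blockShift]
  ring

theorem measurable_blockShift : Measurable (blockShift n) :=
  (measurable_id.sub (measurable_from_top.comp Nat.measurable_floor)).add
    ((measurable_from_top (f := fun k : ℕ => (n k : ℝ))).comp Nat.measurable_floor)

theorem measurableEmbedding_blockShift (hn : StrictMono n) : MeasurableEmbedding (blockShift n) :=
  measurable_blockShift.measurableEmbedding (blockUnshift_blockShift hn).injective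

theorem blockShift_mem_Ico_iff (hn : StrictMono n) {t : ℝ} (ht : 0 ≤ t) (k : ℕ) :
    blockShift n t ∈ Ico (n k : ℝ) (n k + 1) ↔ t ∈ Ico (k : ℝ) (k + 1) := by
  rw [show t ∈ Ico (k : ℝ) (k + 1) ↔ ⌊t⌋₊ = k from (Nat.floor_eq_iff ht).symm]
  refine ⟨fun h => ?_, fun h => h ▸ blockShift_mem_Ico ht⟩
  rw [← blockIndex_blockShift hn, blockIndex_eq_of_mem_Ico hn h]

theorem measurableSet_blocks : MeasurableSet (blocks n) :=
  MeasurableSet.iUnion fun _ => measurableSet_Ico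

theorem blocks_subset_Ici : blocks n ⊆ Ici 0 := by
  simp only [blocks, iUnion_subset_iff]
  exact fun j s hs => (Nat.cast_nonneg _).trans hs.1

theorem blocks_id : blocks id = Ici 0 := by
  refine blocks_subset_Ici.antisymm fun t ht => mem_iUnion.2 ⟨⌊t⌋₊, ?_⟩
  exact ⟨Nat.floor_le ht, Nat.lt_floor_add_one t⟩

theorem blockShift_mem_blocks {t : ℝ} (ht : 0 ≤ t) : blockShift n t ∈ blocks n :=
  mem_iUnion.2 ⟨_, blockShift_mem_Ico ht⟩

theorem volume_restrict_blocks (hn : Injective n) :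
    volume.restrict (blocks n) =
      Measure.sum fun j => volume.restrict (Ico (n j : ℝ) (n j + 1)) := by
  refine Measure.restrict_iUnion (fun i j hij => ?_) fun _ => measurableSet_Ico
  simpa only [onFun, Int.cast_natCast] using
    pairwise_disjoint_Ico_intCast ℝ (show (n i : ℤ) ≠ n j by exact_mod_cast hn.ne hij)

theorem measurePreserving_blockShift (hn : StrictMono n) :
    MeasurePreserving (blockShift n) (volume.restrict (Ici 0)) (volume.restrict (blocks n)) := by
  refine ⟨measurable_blockShift, ?_⟩
  rw [← blocks_id, volume_restrict_blocks injective_id, volume_restrict_blocks hn.injective,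
    Measure.map_sum measurable_blockShift.aemeasurable]
  congr 1
  funext j
  have htrans := (measurePreserving_add_right volume ((n j : ℝ) - j)).restrict_preimage
    (measurableSet_Ico (a := (n j : ℝ)) (b := n j + 1))
  rw [preimage_add_const_Ico, sub_sub_cancel,
    show (n j : ℝ) + 1 - (n j - j) = j + 1 by ring] at htrans
  rw [id, ← htrans.map_eq]
  exact Measure.map_congr (ae_restrict_of_forall_mem measurableSet_Ico fun t ht =>
    blockShift_eq_of_mem_Ico ht)

theorem setIntegral_comp_blockShift_mul (hn : StrictMono n) (g : ℝ → ℝ) {y z : ℝ → ℝ}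
    (hz : ∀ s ∉ blocks n, z s = 0) (hyz : ∀ t, 0 ≤ t → y t = z (blockShift n t)) :
    ∫ t in Ici 0, g (blockShift n t) * y t = ∫ s in Ici 0, g s * z s := by
  calc ∫ t in Ici 0, g (blockShift n t) * y t
      = ∫ t in Ici 0, g (blockShift n t) * z (blockShift n t) :=
        setIntegral_congr_fun measurableSet_Ici fun t ht => by rw [hyz t ht]
    _ = ∫ s in blocks n, g s * z s :=
        (measurePreserving_blockShift hn).integral_comp (measurableEmbedding_blockShift hn)
          fun s => g s * z s
    _ = ∫ s in Ici 0, g s * z s :=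
        (setIntegral_eq_of_subset_of_forall_sdiff_eq_zero measurableSet_Ici blocks_subset_Ici
          fun s hs => by rw [hz s hs.2, mul_zero]).symm

theorem blockRearrange_blockShift (hn : StrictMono n) (x : ℝ → ℝ) {t : ℝ} (ht : 0 ≤ t) :
    blockRearrange n x (blockShift n t) = x t := by
  rw [blockRearrange, indicator_of_mem (blockShift_mem_blocks ht), comp_apply,
    blockUnshift_blockShift hn]

theorem blockRearrange_eq_zero (x : ℝ → ℝ) {s : ℝ} (hs : s ∉ blocks n) :
    blockRearrange n x s = 0 :=
  indicator_of_notMem hs _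

theorem aemeasurable_blockRearrange (hn : StrictMono n) {x : ℝ → ℝ}
    (hx : AEMeasurable x (volume.restrict (Ici 0))) :
    AEMeasurable (blockRearrange n x) (volume.restrict (blocks n)) := by
  have hxS : AEMeasurable (x ∘ blockUnshift n) (volume.restrict (blocks n)) := by
    rw [← (measurePreserving_blockShift hn).aemeasurable_comp_iff
        (measurableEmbedding_blockShift hn), comp_assoc, (blockUnshift_blockShift hn).comp_eq_id,
      comp_id]
    exact hx
  exact hxS.congr (indicator_ae_eq_restrict measurableSet_blocks).symm

theorem transl_eq_zero_of_notMem_blocks (a : ℝ → ℝ) {s : ℝ} (hs : s ∉ blocks n) (k : ℕ) :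
    transl a (n k) s = 0 :=
  if_neg fun h => hs (mem_iUnion.2 ⟨k, h⟩)

theorem transl_blockShift (hn : StrictMono n) (a : ℝ → ℝ) {t : ℝ} (ht : 0 ≤ t) (k : ℕ) :
    transl a (n k) (blockShift n t) = transl a k t := by
  simp only [transl, blockShift_mem_Ico_iff hn ht]
  split_ifs with h
  · rw [blockShift_eq_of_mem_Ico h]
    ring_nf
  · rfl

theorem distribution_eq_of_ae_eq_comp_blockShift (hn : StrictMono n) {f g : ℝ → ℝ}
    (hg : AEMeasurable g (volume.restrict (blocks n))) (hg0 : ∀ s ∉ blocks n, g s = 0)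
    (hfg : f =ᵐ[volume.restrict (Ici 0)] g ∘ blockShift n) {τ : ℝ} (hτ : 0 ≤ τ) :
    volume.restrict (Ici 0) {t | τ < |f t|} = volume.restrict (Ici 0) {s | τ < |g s|} := by
  have hsupp : {s | τ < |g s|} ⊆ blocks n := fun s hs => by
    by_contra h
    change τ < |g s| at hs
    rw [hg0 s h, abs_zero] at hs
    exact hs.not_ge hτ
  rw [measure_lt_abs_eq_of_ae_eq_comp (measurePreserving_blockShift hn) hg hfg,
    Measure.restrict_eq_self _ hsupp, Measure.restrict_eq_self _ (hsupp.trans blocks_subset_Ici)]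

end Blocks

namespace RIS

variable (X : RIS (Ici (0 : ℝ))) {n : ℕ → ℕ}

theorem mem_and_norm_blockRearrange (hn : StrictMono n) {x : ℝ → ℝ} (hx : X.Mem x) :
    X.Mem (blockRearrange n x) ∧ X.N (blockRearrange n x) = X.N x := by
  have hR := aemeasurable_blockRearrange hn (X.mem_meas x hx)
  refine X.symm _ x ?_ hx fun τ hτ => ?_
  · rw [blockRearrange, aemeasurable_indicator_iff measurableSet_blocks,
      Measure.restrict_restrict_of_subset blocks_subset_Ici]
    exact hR.congr (indicator_ae_eq_restrict measurableSet_blocks)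
  · refine (distribution_eq_of_ae_eq_comp_blockShift hn hR (fun s => blockRearrange_eq_zero x)
      ?_ hτ.le).symm
    exact ae_restrict_of_forall_mem measurableSet_Ici fun t ht =>
      (blockRearrange_blockShift hn x ht).symm

theorem mem_and_norm_eq_of_ae_eq_comp_blockShift (hn : StrictMono n) {f g : ℝ → ℝ}
    (hg : X.Mem g) (hg0 : ∀ s ∉ blocks n, g s = 0)
    (hfg : f =ᵐ[volume.restrict (Ici 0)] g ∘ blockShift n) : X.Mem f ∧ X.N f = X.N g := by
  have hg' : AEMeasurable g (volume.restrict (blocks n)) :=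
    (X.mem_meas g hg).mono_measure (Measure.restrict_mono blocks_subset_Ici le_rfl)
  have hf : AEMeasurable f (volume.restrict (Ici 0)) :=
    (((measurePreserving_blockShift hn).aemeasurable_comp_iff
      (measurableEmbedding_blockShift hn)).2 hg').congr hfg.symm
  exact X.symm f g hf hg fun τ hτ =>
    distribution_eq_of_ae_eq_comp_blockShift hn hg' hg0 hfg hτ.le

end RIS

theorem stmt14_general (X : RIS (Set.Ici (0:ℝ)))
    (a : ℝ → ℝ)
    (n : ℕ → ℕ) (hn : StrictMono n)
    (hcompl : ComplSeq X (fun k => transl a (n k))) :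
    ComplSeq X (transl a) := by
  obtain ⟨b, C, hC, hbi, hP⟩ := hcompl
  refine ⟨fun k t => b k (blockShift n t), C, hC, fun j k => ?_, fun x hx => ?_⟩
  · rw [← hbi j k]
    exact setIntegral_comp_blockShift_mul hn (b k)
      (fun s hs => transl_eq_zero_of_notMem_blocks a hs j)
      fun t ht => (transl_blockShift hn a ht j).symm
  obtain ⟨hRx, hRx_norm⟩ := X.mem_and_norm_blockRearrange hn hx
  obtain ⟨hPRx, hPRx_le⟩ := hP _ hRx
  have hcoeff : ∀ k, ∫ s in Ici 0, b k (blockShift n s) * x s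
      = ∫ s in Ici 0, b k s * blockRearrange n x s := fun k =>
    setIntegral_comp_blockShift_mul hn (b k) (fun s => blockRearrange_eq_zero x)
      fun t ht => (blockRearrange_blockShift hn x ht).symm
  simp only [hcoeff]
  obtain ⟨hQx, hQx_norm⟩ := X.mem_and_norm_eq_of_ae_eq_comp_blockShift hn
    (f := fun t => ∑' k, (∫ s in Ici 0, b k s * blockRearrange n x s) * transl a k t) hPRx
    (fun s hs => by simp only [transl_eq_zero_of_notMem_blocks a hs, mul_zero, tsum_zero])
    (ae_restrict_of_forall_mem measurableSet_Ici fun t ht => by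
      simp only [comp_apply, transl_blockShift hn a ht])
  exact ⟨hQx, hQx_norm ▸ hRx_norm ▸ hPRx_le⟩

/-- Let `X` be a separable r.i. space on `(0,∞)`, `a ∈ X`, `a ≠ 0`,
`supp a ⊆ [0,1)`. If some subsequence `{τ_{n_k} a}` of the sequence of translations spans
a complemented subspace of `X`, then the whole sequence `{τ_n a}` spans a complemented
subspace of `X`. -/
theorem stmt14 (X : RIS (Set.Ici (0:ℝ)))
    -- separability (order continuity of the norm):
    (hsep : ∀ f, X.Mem f → ∀ B : ℕ → Set ℝ, (∀ n, MeasurableSet (B n)) → Antitone B →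
      volume (Set.Ici (0:ℝ) ∩ ⋂ n, B n) = 0 →
      Tendsto (fun n => X.N fun t => (B n).indicator f t) atTop (𝓝 0))
    (a : ℝ → ℝ) (ha : X.Mem a)
    (hane : ¬ a =ᵐ[volume.restrict (Set.Ici (0:ℝ))] 0)
    (hsupp : ∀ t, t ∉ Set.Ico (0:ℝ) 1 → a t = 0)
    (n : ℕ → ℕ) (hn : StrictMono n)
    (hcompl : ComplSeq X (fun k => transl a (n k))) :
    ComplSeq X (transl a) :=
  stmt14_general X a n hn hcompl
end
end
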